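/- arXiv:1903.04286 — 3 statements merged into one kernel-verified Lean document; each statement's English description precedes it below -/
import Mathlib

section
/- For every integer n ≥ 7, the general position number of the Kneser graph K(n,2) equals n − 1. -/
namespace SimpleGraph

variable {V : Type*}

/-- `S` is a general position set of `G`: no vertex of `S` lies on a geodesic
(shortest path) between two other vertices of `S`. -/
def IsGPSet (G : SimpleGraph V) (S : Set V) : Prop :=
  ∀ ⦃u v w : V⦄, u ∈ S → v ∈ S → w ∈ S → u ≠ v → u ≠ w → v ≠ w →
    ∀ p : G.Walk u v, p.IsPath → p.length = G.dist u v → w ∉ p.support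

/-- The general position number of `G`: the maximum cardinality of a general
position set of `G`. -/
noncomputable def gpNumber (G : SimpleGraph V) : ℕ :=
  sSup {n | ∃ S : Set V, G.IsGPSet S ∧ n = S.ncard}

/-- `ρ(G)`: the maximum number of vertices in a union of pairwise independent
complete subgraphs of `G`, where complete subgraphs `Q`, `Q'` are independent
if `d_G(u,u') ≥ 2` for every `u ∈ Q` and `u' ∈ Q'`. -/
noncomputable def rho (G : SimpleGraph V) : ℕ :=
  sSup {n | ∃ 𝒬 : Finset (Finset V),
    (∀ Q ∈ 𝒬, G.IsClique (Q : Set V)) ∧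
    (∀ Q ∈ 𝒬, ∀ Q' ∈ 𝒬, Q ≠ Q' → ∀ u ∈ Q, ∀ u' ∈ Q', 2 ≤ G.edist u u') ∧
    n = (⋃ Q ∈ 𝒬, (Q : Set V)).ncard}

/-- A graph is complete multipartite iff non-adjacency is transitive. -/
def IsCompleteMultipartite' (G : SimpleGraph V) : Prop := Transitive (¬G.Adj · ·)

/-- `η(G)`: the maximum order of an induced complete multipartite subgraph of
the complement of `G`. -/
noncomputable def eta (G : SimpleGraph V) : ℕ :=
  sSup {n | ∃ B : Set V, (Gᶜ.induce B).IsCompleteMultipartite' ∧ n = B.ncard}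

/-- An independent set of a graph. -/
def IsIndepSet' (G : SimpleGraph V) (S : Set V) : Prop :=
  S.Pairwise fun u v => ¬ G.Adj u v

/-- The independence number `α(G)`. -/
noncomputable def indepNum' (G : SimpleGraph V) : ℕ :=
  sSup {n | ∃ S : Set V, G.IsIndepSet' S ∧ n = S.ncard}

end SimpleGraph

/-- The Kneser graph `K(n,k)`: vertices are the `k`-element subsets of an
`n`-element set, two vertices adjacent iff the corresponding sets are disjoint. -/
def kneserGraph (n k : ℕ) : SimpleGraph {s : Finset (Fin n) // s.card = k} where
  Adj a b := Disjoint a.1 b.1 ∧ a ≠ b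
  symm := by
    constructor
    rintro a b ⟨h1, h2⟩
    exact ⟨h1.symm, h2.symm⟩
  loopless := by
    constructor
    rintro a ⟨-, h⟩
    exact h rfl


/-!
A star `{v | z ∈ v}` of `K(n,2)` is an independent set of `n - 1` vertices at pairwise distance
two, hence in general position. Conversely, if a vertex `w` of a general position set `S` were
adjacent to two non-adjacent `u, v ∈ S`, then `u - w - v` would be a geodesic. Read as a graph
on `Fin n` whose edges are the `2`-sets in `S`, this says that no edge is disjoint from a path of
length two. Such a graph is a star, a matching, or has at most six edges: a vertex of degree three
confines every edge avoiding it to its three neighbours, and if all degrees are at most two, a path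
`y - x - y'` meets every edge, so the three degrees of `x, y, y'` bound the number of edges.
For `n ≥ 7` this gives at most `n - 1` edges.
-/

open Finset

namespace SimpleGraph

variable {V : Type*} {G : SimpleGraph V} {S : Set V}

theorem gpNumber_eq_ncard (hS : G.IsGPSet S) (hmax : ∀ T, G.IsGPSet T → T.ncard ≤ S.ncard) :
    G.gpNumber = S.ncard :=
  IsGreatest.csSup_eq ⟨⟨S, hS, rfl⟩, by rintro _ ⟨T, hT, rfl⟩; exact hmax T hT⟩

theorem IsGPSet.adj_of_adj_of_adj (hS : G.IsGPSet S) {u v w : V} (hu : u ∈ S) (hv : v ∈ S)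
    (hw : w ∈ S) (huv : u ≠ v) (huw : G.Adj u w) (hwv : G.Adj w v) : G.Adj u v := by
  by_contra h
  let p : G.Walk u v := .cons huw (.cons hwv .nil)
  have hdist : G.dist u v = 2 := by
    have hle : G.dist u v ≤ 2 := dist_le p
    have hpos := Reachable.pos_dist_of_ne ⟨p⟩ huv
    have hne : G.dist u v ≠ 1 := mt dist_eq_one_iff_adj.mp h
    omega
  refine hS hu hv hw huv huw.ne hwv.ne.symm p ?_ hdist.symm (by simp [p])
  simp [p, Walk.isPath_def, huv, huw.ne, hwv.ne]

theorem IsIndepSet.isGPSet (hS : G.IsIndepSet S) (hdist : ∀ u ∈ S, ∀ v ∈ S, G.dist u v ≤ 2) :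
    G.IsGPSet S := by
  intro u v w hu hv hw huv huw hvw p _ hp hwp
  rcases p with _ | ⟨h₁, _ | ⟨h₂, _ | ⟨h₃, q⟩⟩⟩
  · exact huv rfl
  · simp only [Walk.support_cons, Walk.support_nil, List.mem_cons, List.mem_nil_iff,
      or_false] at hwp
    rcases hwp with rfl | rfl <;> contradiction
  · simp only [Walk.support_cons, Walk.support_nil, List.mem_cons, List.mem_nil_iff,
      or_false] at hwp
    rcases hwp with rfl | rfl | rfl
    exacts [huw rfl, hS hu hw huw h₁, hvw rfl]
  · have := hdist u hu v hv
    simp only [Walk.length_cons] at hp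
    omega

end SimpleGraph

section PairFamily

variable {α : Type*} [DecidableEq α]

theorem Finset.exists_eq_pair_of_card_eq_two {e : Finset α} (he : #e = 2) {x : α} (hx : x ∈ e) :
    ∃ y, e = {x, y} := by
  obtain ⟨p, q, -, rfl⟩ := card_eq_two.mp he
  rcases mem_insert.mp hx with rfl | hx
  · exact ⟨q, rfl⟩
  · exact ⟨p, by rw [mem_singleton.mp hx, pair_comm]⟩

/-- For a family of `2`-sets read as a graph on `α`: no edge is disjoint from a path of length
two. -/
def HasNoDisjointCherry (E : Finset (Finset α)) : Prop :=
  ∀ ⦃a⦄, a ∈ E → ∀ ⦃b⦄, b ∈ E → ∀ ⦃c⦄, c ∈ E → a ≠ b → Disjoint a c → Disjoint b c → Disjoint a b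

variable [Fintype α] {E : Finset (Finset α)} {x : α}

def pairNeighbors (E : Finset (Finset α)) (x : α) : Finset α := {y | {x, y} ∈ E}

theorem mem_pairNeighbors {y : α} : y ∈ pairNeighbors E x ↔ {x, y} ∈ E := by
  simp [pairNeighbors]

theorem self_notMem_pairNeighbors (h2 : ∀ e ∈ E, #e = 2) : x ∉ pairNeighbors E x := fun hx => by
  simpa using h2 _ (mem_pairNeighbors.mp hx)

theorem card_filter_mem_le_card_pairNeighbors (h2 : ∀ e ∈ E, #e = 2) :
    #{e ∈ E | x ∈ e} ≤ #(pairNeighbors E x) := by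
  refine le_trans (card_le_card fun e he => ?_) (card_image_le (f := fun y => {x, y}))
  obtain ⟨he, hx⟩ := mem_filter.mp he
  obtain ⟨y, rfl⟩ := exists_eq_pair_of_card_eq_two (h2 e he) hx
  exact mem_image.mpr ⟨y, mem_pairNeighbors.mpr he, rfl⟩

theorem card_le_sum_card_pairNeighbors (h2 : ∀ e ∈ E, #e = 2) {T : Finset α}
    (hT : ∀ e ∈ E, ¬Disjoint T e) : #E ≤ ∑ t ∈ T, #(pairNeighbors E t) := by
  have hcover : E ⊆ T.biUnion fun t => {e ∈ E | t ∈ e} := fun e he => by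
    obtain ⟨t, ht, hte⟩ := not_disjoint_iff.mp (hT e he)
    exact mem_biUnion.mpr ⟨t, ht, mem_filter.mpr ⟨he, hte⟩⟩
  exact (card_le_card hcover).trans <| card_biUnion_le.trans <|
    sum_le_sum fun t _ => card_filter_mem_le_card_pairNeighbors h2

theorem card_le_card_sub_one_of_forall_mem (h2 : ∀ e ∈ E, #e = 2) (hx : ∀ e ∈ E, x ∈ e) :
    #E ≤ Fintype.card α - 1 := by
  have hE : #E ≤ #(pairNeighbors E x) := by
    simpa using card_le_sum_card_pairNeighbors h2 (T := {x}) (by simpa using hx)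
  have hN : pairNeighbors E x ⊆ univ.erase x := fun y hy =>
    mem_erase.mpr ⟨fun h => self_notMem_pairNeighbors h2 (h ▸ hy), mem_univ y⟩
  simpa using hE.trans (card_le_card hN)

theorem HasNoDisjointCherry.not_disjoint_of_mem_pairNeighbors (hE : HasNoDisjointCherry E)
    (h2 : ∀ e ∈ E, #e = 2) {y y' : α} (hy : y ∈ pairNeighbors E x) (hy' : y' ∈ pairNeighbors E x)
    (hyy' : y ≠ y') {g : Finset α} (hg : g ∈ E) : ¬Disjoint {x, y, y'} g := fun hdisj => by
  have hyx : y ≠ x := fun h => self_notMem_pairNeighbors h2 (h ▸ hy)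
  have hne : ({x, y} : Finset α) ≠ {x, y'} := fun h => by
    have hy : y ∈ ({x, y'} : Finset α) := h ▸ by simp
    simp [hyx, hyy'] at hy
  have hcherry := hE (mem_pairNeighbors.mp hy) (mem_pairNeighbors.mp hy') hg hne
    (disjoint_of_subset_left (by simp [insert_subset_iff]) hdisj)
    (disjoint_of_subset_left (by simp [insert_subset_iff]) hdisj)
  simp at hcherry

theorem HasNoDisjointCherry.card_pairNeighbors_sdiff_le_one (hE : HasNoDisjointCherry E)
    (h2 : ∀ e ∈ E, #e = 2) {g : Finset α} (hg : g ∈ E) (hxg : x ∉ g) :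
    #(pairNeighbors E x \ g) ≤ 1 := by
  refine card_le_one.mpr fun y hy y' hy' => by_contra fun hyy' => ?_
  obtain ⟨hy, hyg⟩ := mem_sdiff.mp hy
  obtain ⟨hy', hy'g⟩ := mem_sdiff.mp hy'
  exact hE.not_disjoint_of_mem_pairNeighbors h2 hy hy' hyy' hg (by simp [hxg, hyg, hy'g])

theorem HasNoDisjointCherry.card_le_six_of_three_le_card_pairNeighbors
    (hE : HasNoDisjointCherry E) (h2 : ∀ e ∈ E, #e = 2) (hx : 3 ≤ #(pairNeighbors E x))
    {g : Finset α} (hg : g ∈ E) (hxg : x ∉ g) : #E ≤ 6 := by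
  have hN : #(pairNeighbors E x) = 3 := by
    have := hE.card_pairNeighbors_sdiff_le_one h2 hg hxg
    have := card_le_card_sdiff_add_card (s := pairNeighbors E x) (t := g)
    rw [h2 g hg] at this
    omega
  have hsub : ∀ e ∈ E, x ∉ e → e ⊆ pairNeighbors E x := fun e he hxe => by
    have := hE.card_pairNeighbors_sdiff_le_one h2 he hxe
    have := card_sdiff_add_card_inter (pairNeighbors E x) e
    have hinter : pairNeighbors E x ∩ e = e :=
      eq_of_subset_of_card_le inter_subset_right (by rw [h2 e he]; omega)
    exact hinter ▸ inter_subset_left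
  have hout : #{e ∈ E | x ∉ e} ≤ 3 := calc
    _ ≤ #((pairNeighbors E x).powersetCard 2) := card_le_card fun e he => by
        obtain ⟨he, hxe⟩ := mem_filter.mp he
        exact mem_powersetCard.mpr ⟨hsub e he hxe, h2 e he⟩
    _ = 3 := by rw [card_powersetCard, hN]; rfl
  have hin : #{e ∈ E | x ∈ e} ≤ 3 := (card_filter_mem_le_card_pairNeighbors h2).trans hN.le
  have := card_filter_add_card_filter_not (s := E) (fun e => x ∈ e)
  omega

theorem HasNoDisjointCherry.card_le_six_of_card_pairNeighbors_le_two
    (hE : HasNoDisjointCherry E) (h2 : ∀ e ∈ E, #e = 2) (hmax : ∀ y, #(pairNeighbors E y) ≤ 2)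
    (hx : 1 < #(pairNeighbors E x)) : #E ≤ 6 := by
  obtain ⟨y, hy, y', hy', hyy'⟩ := one_lt_card.mp hx
  calc #E ≤ ∑ t ∈ {x, y, y'}, #(pairNeighbors E t) := card_le_sum_card_pairNeighbors h2
        fun g hg => hE.not_disjoint_of_mem_pairNeighbors h2 hy hy' hyy' hg
    _ ≤ ∑ t ∈ {x, y, y'}, 2 := sum_le_sum fun t _ => hmax t
    _ ≤ 6 := by
      rw [sum_const, smul_eq_mul]
      have := card_le_three (a := x) (b := y) (c := y')
      omega

theorem two_mul_card_le_of_card_pairNeighbors_le_one (h2 : ∀ e ∈ E, #e = 2)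
    (hmax : ∀ y, #(pairNeighbors E y) ≤ 1) : 2 * #E ≤ Fintype.card α := by
  have := sum_card_inter_le (s := univ) (B := E) (n := 1) fun y _ =>
    (card_filter_mem_le_card_pairNeighbors h2).trans (hmax y)
  simp only [univ_inter, mul_one, card_univ] at this
  rwa [sum_congr rfl h2, sum_const, smul_eq_mul, mul_comm] at this

theorem HasNoDisjointCherry.card_le (hE : HasNoDisjointCherry E) (h2 : ∀ e ∈ E, #e = 2)
    (hα : 7 ≤ Fintype.card α) : #E ≤ Fintype.card α - 1 := by
  by_cases hstar : ∃ x, ∀ e ∈ E, x ∈ e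
  · obtain ⟨x, hx⟩ := hstar
    exact card_le_card_sub_one_of_forall_mem h2 hx
  push Not at hstar
  by_cases h3 : ∃ x, 3 ≤ #(pairNeighbors E x)
  · obtain ⟨x, hx⟩ := h3
    obtain ⟨g, hg, hxg⟩ := hstar x
    have := hE.card_le_six_of_three_le_card_pairNeighbors h2 hx hg hxg
    omega
  push Not at h3
  by_cases h2' : ∃ x, 1 < #(pairNeighbors E x)
  · obtain ⟨x, hx⟩ := h2'
    have := hE.card_le_six_of_card_pairNeighbors_le_two h2 (fun y => by have := h3 y; omega) hx
    omega
  push Not at h2'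
  have := two_mul_card_le_of_card_pairNeighbors_le_one h2 h2'
  omega

end PairFamily

section Kneser

variable {n k : ℕ}

theorem kneserGraph_adj_iff (hk : 0 < k) {u v : {s : Finset (Fin n) // #s = k}} :
    (kneserGraph n k).Adj u v ↔ Disjoint u.1 v.1 := by
  refine ⟨And.left, fun h => ⟨h, ?_⟩⟩
  rintro rfl
  rw [disjoint_self, bot_eq_empty] at h
  exact hk.ne' (by simpa [h] using u.2.symm)

theorem kneserGraph_dist_le_two (hk : 0 < k) {u v : {s : Finset (Fin n) // #s = k}}
    (huv : #(u.1 ∪ v.1) + k ≤ n) : (kneserGraph n k).dist u v ≤ 2 := by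
  obtain ⟨t, ht, htk⟩ := exists_subset_card_eq (s := (u.1 ∪ v.1)ᶜ) (n := k)
    (by rw [card_compl, Fintype.card_fin]; omega)
  obtain ⟨hut, hvt⟩ := disjoint_union_left.mp (disjoint_of_subset_right ht disjoint_compl_right)
  let w : {s : Finset (Fin n) // #s = k} := ⟨t, htk⟩
  have huw : (kneserGraph n k).Adj u w := (kneserGraph_adj_iff hk).2 hut
  have hwv : (kneserGraph n k).Adj w v := (kneserGraph_adj_iff hk).2 hvt.symm
  exact SimpleGraph.dist_le (.cons huw (.cons hwv .nil))

def kneserTwoStar (z : Fin n) (y : {y // y ≠ z}) : {s : Finset (Fin n) // #s = 2} :=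
  ⟨{z, y.1}, card_pair y.2.symm⟩

theorem ncard_range_kneserTwoStar (z : Fin n) : (Set.range (kneserTwoStar z)).ncard = n - 1 := by
  have hinj : Function.Injective (kneserTwoStar z) := fun y y' h => by
    have hy : y.1 ∈ (kneserTwoStar z y').1 := h ▸ by simp [kneserTwoStar]
    simpa [kneserTwoStar, y.2, Subtype.ext_iff] using hy
  rw [Set.ncard_range_of_injective hinj]
  simp

theorem isGPSet_range_kneserTwoStar (hn : 5 ≤ n) (z : Fin n) :
    (kneserGraph n 2).IsGPSet (Set.range (kneserTwoStar z)) := by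
  refine SimpleGraph.IsIndepSet.isGPSet ?_ ?_
  · rintro _ ⟨y, rfl⟩ _ ⟨y', rfl⟩ - hadj
    simpa [kneserTwoStar] using hadj.1
  · rintro _ ⟨y, rfl⟩ _ ⟨y', rfl⟩
    refine kneserGraph_dist_le_two two_pos ?_
    have : #((kneserTwoStar z y).1 ∪ (kneserTwoStar z y').1) ≤ 3 := by
      simpa [kneserTwoStar, insert_union] using card_le_three (a := z) (b := y.1) (c := y'.1)
    exact (Nat.add_le_add_right this 2).trans hn

theorem ncard_le_of_isGPSet_kneserGraph_two (hn : 7 ≤ n) {S : Set {s : Finset (Fin n) // #s = 2}}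
    (hS : (kneserGraph n 2).IsGPSet S) : S.ncard ≤ n - 1 := by
  let E := S.toFinite.toFinset.map (Function.Embedding.subtype _)
  have h2 : ∀ e ∈ E, #e = 2 := by
    simp only [E, mem_map, Function.Embedding.subtype_apply]
    rintro _ ⟨u, -, rfl⟩
    exact u.2
  have hE : HasNoDisjointCherry E := by
    simp only [HasNoDisjointCherry, E, mem_map, Set.Finite.mem_toFinset,
      Function.Embedding.subtype_apply]
    rintro _ ⟨u, hu, rfl⟩ _ ⟨v, hv, rfl⟩ _ ⟨w, hw, rfl⟩ huv huw hvw
    simp only [← kneserGraph_adj_iff two_pos] at huw hvw ⊢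
    exact hS.adj_of_adj_of_adj hu hv hw (fun h => huv (h ▸ rfl)) huw hvw.symm
  have := hE.card_le h2 (by simpa using hn)
  rwa [card_map, ← Set.ncard_eq_toFinset_card, Fintype.card_fin] at this

end Kneser

/-- For every integer `n ≥ 7`, the general position number of the Kneser graph
`K(n,2)` equals `n - 1`. -/
theorem gpNumber_kneserGraph_two (n : ℕ) (hn : 7 ≤ n) :
    (kneserGraph n 2).gpNumber = n - 1 := by
  let z : Fin n := ⟨0, by omega⟩
  rw [← ncard_range_kneserTwoStar z]
  refine SimpleGraph.gpNumber_eq_ncard (isGPSet_range_kneserTwoStar (by omega) z) fun T hT => ?_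
  rw [ncard_range_kneserTwoStar]
  exact ncard_le_of_isGPSet_kneserGraph_two hn hT
end

section
/- If k ≥ 2 and n_1, …, n_k ≥ 2 are integers, then the general position number of the Cartesian product K_{n_1} □ ⋯ □ K_{n_k} of complete graphs satisfies gp(K_{n_1} □ ⋯ □ K_{n_k}) ≥ n_1 + ⋯ + n_k − k. -/
/-- The Cartesian product `K_{n₁} □ ⋯ □ K_{n_k}` of complete graphs (a Hamming
graph): vertices are tuples `(j₁, …, j_k)` with `j_i ∈ {1, …, n_i}`, two tuples
adjacent iff they differ in exactly one coordinate. -/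
def hammingGraph {k : ℕ} (n : Fin k → ℕ) : SimpleGraph (Π i, Fin (n i)) where
  Adj a b := ∃! i, a i ≠ b i
  symm := by
    constructor
    rintro a b ⟨i, hi, hmin⟩
    exact ⟨i, hi.symm, fun j hj => hmin j hj.symm⟩
  loopless := by
    constructor
    rintro a ⟨i, hi, -⟩
    exact hi rfl

/-!
Fix a vertex `z` and let `S` be its neighbourhood: the `∑ (nᵢ - 1)` tuples that differ from `z`
in exactly one coordinate. Two of them are adjacent exactly when they differ from `z` in the same
coordinate, so adjacency on `S` is transitive. Any two vertices of `S` are at distance at most two,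
so a vertex `w ∈ S` inside a geodesic between `u, v ∈ S` would be adjacent to both, forcing `u`
and `v` to be adjacent, which leaves no room for `w`.
-/

namespace SimpleGraph

variable {V : Type*} {G : SimpleGraph V}

theorem dist_add_dist_le_of_mem_support {u v w : V} (p : G.Walk u v)
    (hp : p.length = G.dist u v) (hw : w ∈ p.support) :
    G.dist u w + G.dist w v ≤ G.dist u v := by
  obtain ⟨q, r, rfl⟩ := Walk.mem_support_iff_exists_append.mp hw
  rw [← hp, Walk.length_append]
  exact add_le_add (dist_le q) (dist_le r)

theorem isGPSet_of_subset_neighborSet {z : V} {S : Set V} (hS : S ⊆ G.neighborSet z)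
    (htrans : ∀ u ∈ S, ∀ v ∈ S, ∀ w ∈ S, u ≠ w → G.Adj u v → G.Adj v w → G.Adj u w) :
    G.IsGPSet S := by
  intro u v w hu hv hw huv huw hvw p _ hp hwp
  have hzu : G.Adj u z := (hS hu).symm
  have hzv : G.Adj z v := hS hv
  have hzw : G.Adj z w := hS hw
  have huv_le : G.dist u v ≤ 2 := dist_le (Walk.cons hzu (Walk.cons hzv Walk.nil))
  have huw_pos : 0 < G.dist u w := (hzu.reachable.trans hzw.reachable).pos_dist_of_ne huw
  have hwv_pos : 0 < G.dist w v :=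
    (hzw.reachable.symm.trans hzv.reachable).pos_dist_of_ne hvw.symm
  have hsum := dist_add_dist_le_of_mem_support p hp hwp
  have hadj_uw : G.Adj u w := dist_eq_one_iff_adj.mp (by omega)
  have hadj_wv : G.Adj w v := dist_eq_one_iff_adj.mp (by omega)
  have hdist_uv : G.dist u v = 1 :=
    dist_eq_one_iff_adj.mpr (htrans u hu w hw v hv huv hadj_uw hadj_wv)
  omega

theorem IsGPSet.ncard_le_gpNumber [Finite V] {S : Set V} (hS : G.IsGPSet S) :
    S.ncard ≤ G.gpNumber :=
  le_csSup ⟨Nat.card V, by rintro _ ⟨T, -, rfl⟩; exact Set.ncard_le_card T⟩ ⟨S, hS, rfl⟩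

end SimpleGraph

namespace hammingGraph

variable {k : ℕ} {n : Fin k → ℕ}

open Function

theorem adj_update_update (z : Π i, Fin (n i)) {i : Fin k} {a b : Fin (n i)} (hab : a ≠ b) :
    (hammingGraph n).Adj (update z i a) (update z i b) := by
  refine ⟨i, by simpa using hab, fun j hj => ?_⟩
  by_contra hji
  simp [update_of_ne hji] at hj

theorem eq_of_adj_update_update {z : Π i, Fin (n i)} {i i' : Fin k} {a : Fin (n i)}
    {b : Fin (n i')} (ha : a ≠ z i) (hb : b ≠ z i')
    (hadj : (hammingGraph n).Adj (update z i a) (update z i' b)) : i = i' := by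
  obtain ⟨j, -, huniq⟩ := hadj
  by_contra hii
  have hi : update z i a i ≠ update z i' b i := by simpa [update_of_ne hii] using ha
  have hi' : update z i a i' ≠ update z i' b i' := by
    simpa [update_of_ne (Ne.symm hii)] using hb.symm
  exact hii ((huniq i hi).trans (huniq i' hi').symm)

def neighborOf (z : Π i, Fin (n i)) (x : Σ i, {a : Fin (n i) // a ≠ z i}) : Π i, Fin (n i) :=
  update z x.1 x.2

theorem neighborOf_injective (z : Π i, Fin (n i)) : Injective (neighborOf z) := by
  rintro ⟨i, a, ha⟩ ⟨i', b, hb⟩ h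
  obtain rfl : i = i' := by
    by_contra hii
    exact ha (by simpa [neighborOf, update_of_ne hii] using congrFun h i)
  obtain rfl : a = b := by simpa [neighborOf] using congrFun h i
  rfl

theorem range_neighborOf_subset (z : Π i, Fin (n i)) :
    Set.range (neighborOf z) ⊆ (hammingGraph n).neighborSet z := by
  rintro _ ⟨⟨i, a, ha⟩, rfl⟩
  simpa [neighborOf] using adj_update_update z (Ne.symm ha)

theorem isGPSet_range_neighborOf (z : Π i, Fin (n i)) :
    (hammingGraph n).IsGPSet (Set.range (neighborOf z)) := by
  refine SimpleGraph.isGPSet_of_subset_neighborSet (range_neighborOf_subset z) ?_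
  rintro _ ⟨⟨i, a, ha⟩, rfl⟩ _ ⟨⟨i', b, hb⟩, rfl⟩ _ ⟨⟨i'', c, hc⟩, rfl⟩ huw huv hvw
  obtain rfl := eq_of_adj_update_update ha hb huv
  obtain rfl := eq_of_adj_update_update hb hc hvw
  exact adj_update_update z fun hac => huw (by subst hac; rfl)

theorem ncard_range_neighborOf (z : Π i, Fin (n i)) :
    (Set.range (neighborOf z)).ncard = ∑ i, (n i - 1) := by
  rw [← Nat.card_coe_set_eq, Nat.card_range_of_injective (neighborOf_injective z),
    Nat.card_eq_fintype_card, Fintype.card_sigma]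
  refine Finset.sum_congr rfl fun i _ => ?_
  rw [Fintype.card_subtype_compl, Fintype.card_subtype_eq, Fintype.card_fin]

end hammingGraph

theorem gpNumber_hammingGraph_ge_general {k : ℕ} (n : Fin k → ℕ)
    (hn : ∀ i, 2 ≤ n i) :
    (∑ i, n i) - k ≤ (hammingGraph n).gpNumber := by
  let z : Π i, Fin (n i) := fun i => ⟨0, by linarith [hn i]⟩
  have hsum : (∑ i, n i) - k = ∑ i, (n i - 1) := by
    rw [Finset.sum_tsub_distrib _ fun i _ => by linarith [hn i]]
    simp
  rw [hsum, ← hammingGraph.ncard_range_neighborOf z]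
  exact (hammingGraph.isGPSet_range_neighborOf z).ncard_le_gpNumber

/-- If `k ≥ 2` and `n₁, …, n_k ≥ 2`, then
`gp(K_{n₁} □ ⋯ □ K_{n_k}) ≥ n₁ + ⋯ + n_k - k`. -/
theorem gpNumber_hammingGraph_ge {k : ℕ} (hk : 2 ≤ k) (n : Fin k → ℕ)
    (hn : ∀ i, 2 ≤ n i) :
    (∑ i, n i) - k ≤ (hammingGraph n).gpNumber :=
  gpNumber_hammingGraph_ge_general n hn
end

section
/- If G is a finite connected graph with diameter 2, then gp(G) = ρ(G). -/
namespace SimpleGraph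

variable {V : Type*} {G : SimpleGraph V} {S : Set V} {u v w : V}

lemma two_le_edist_iff : 2 ≤ G.edist u v ↔ u ≠ v ∧ ¬G.Adj u v := by
  rw [← not_lt, ← one_add_one_eq_two, ENat.lt_add_one_iff ENat.one_ne_top,
    edist_le_one_iff_adj_or_eq]
  tauto

lemma dist_le_of_ediam_le {n : ℕ} (h : G.ediam ≤ n) : G.dist u v ≤ n :=
  ENat.toNat_le_of_le_natCast (edist_le_ediam.trans h)

lemma Walk.dist_add_dist_of_mem_support (p : G.Walk u v) (hp : p.length = G.dist u v)
    (hw : w ∈ p.support) : G.dist u w + G.dist w v = G.dist u v := by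
  classical
  have hsplit := congrArg Walk.length (p.take_spec hw)
  rw [Walk.length_append] at hsplit
  have := dist_le (p.takeUntil w hw)
  have := dist_le (p.dropUntil w hw)
  have := (p.takeUntil w hw).reachable.dist_triangle_left v
  omega

/-- `S` induces a cluster graph, i.e. a disjoint union of cliques. -/
def IsClusterSet (G : SimpleGraph V) (S : Set V) : Prop :=
  ∀ ⦃a b c : V⦄, a ∈ S → b ∈ S → c ∈ S → G.Adj a b → G.Adj b c → a ≠ c → G.Adj a c

lemma IsGPSet.isClusterSet (hS : G.IsGPSet S) : G.IsClusterSet S := by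
  intro a b c ha hb hc hab hbc hac
  by_contra hnadj
  let p : G.Walk a c := .cons hab (.cons hbc .nil)
  have h2 : 2 ≤ G.dist a c := p.reachable.one_lt_dist_of_ne_of_not_adj hac hnadj
  have hdist : p.length = G.dist a c := le_antisymm (by simpa [p] using h2) (dist_le p)
  exact hS ha hc hb hac hab.ne hbc.ne' p (p.isPath_of_length_eq_dist hdist) hdist (by simp [p])

lemma IsClusterSet.isGPSet (hS : G.IsClusterSet S) (hG : G.ediam ≤ 2) : G.IsGPSet S := by
  classical
  intro u v w hu hv hw huv huw hvw p _ hp hwp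
  have hsplit := p.dist_add_dist_of_mem_support hp hwp
  have hpos_uw := (p.takeUntil w hwp).reachable.pos_dist_of_ne huw
  have hpos_wv := (p.dropUntil w hwp).reachable.pos_dist_of_ne hvw.symm
  have hle_uv : G.dist u v ≤ 2 := dist_le_of_ediam_le hG
  have hadj_uw : G.Adj u w := dist_eq_one_iff_adj.mp (by omega)
  have hadj_wv : G.Adj w v := dist_eq_one_iff_adj.mp (by omega)
  have hnadj_uv : ¬G.Adj u v := by rw [← dist_eq_one_iff_adj]; omega
  exact hnadj_uv (hS hu hw hv hadj_uw hadj_wv huv)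

lemma isGPSet_iff_isClusterSet (hG : G.ediam ≤ 2) : G.IsGPSet S ↔ G.IsClusterSet S :=
  ⟨IsGPSet.isClusterSet, (IsClusterSet.isGPSet · hG)⟩


def IsIndepCliqueFamily (G : SimpleGraph V) (𝒬 : Finset (Finset V)) : Prop :=
  (∀ Q ∈ 𝒬, G.IsClique (Q : Set V)) ∧
    (∀ Q ∈ 𝒬, ∀ Q' ∈ 𝒬, Q ≠ Q' → ∀ u ∈ Q, ∀ u' ∈ Q', 2 ≤ G.edist u u')

lemma IsIndepCliqueFamily.eq_of_adj {𝒬 : Finset (Finset V)} {Q Q' : Finset V}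
    (h𝒬 : G.IsIndepCliqueFamily 𝒬) (hQ : Q ∈ 𝒬) (hQ' : Q' ∈ 𝒬) (hu : u ∈ Q) (hv : v ∈ Q')
    (huv : G.Adj u v) : Q = Q' := by
  by_contra hne
  exact (two_le_edist_iff.mp (h𝒬.2 Q hQ Q' hQ' hne u hu v hv)).2 huv

lemma IsIndepCliqueFamily.isClusterSet {𝒬 : Finset (Finset V)} (h𝒬 : G.IsIndepCliqueFamily 𝒬) :
    G.IsClusterSet (⋃ Q ∈ 𝒬, (Q : Set V)) := by
  intro a b c ha hb hc hab hbc hac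
  simp only [Set.mem_iUnion, Finset.mem_coe, exists_prop] at ha hb hc
  obtain ⟨Qa, hQa, ha⟩ := ha
  obtain ⟨Qb, hQb, hb⟩ := hb
  obtain ⟨Qc, hQc, hc⟩ := hc
  obtain rfl := h𝒬.eq_of_adj hQa hQb ha hb hab
  obtain rfl := h𝒬.eq_of_adj hQa hQc hb hc hbc
  exact h𝒬.1 Qa hQa ha hc hac

lemma IsClusterSet.eq_or_adj_trans {a b c : V} (hS : G.IsClusterSet S) (ha : a ∈ S) (hb : b ∈ S)
    (hc : c ∈ S) (hab : a = b ∨ G.Adj a b) (hbc : b = c ∨ G.Adj b c) : a = c ∨ G.Adj a c := by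
  rcases hab with rfl | hab
  · exact hbc
  rcases hbc with rfl | hbc
  · exact .inr hab
  by_cases hac : a = c
  · exact .inl hac
  · exact .inr (hS ha hb hc hab hbc hac)

lemma IsClusterSet.exists_isIndepCliqueFamily (hS : G.IsClusterSet S) (hfin : S.Finite) :
    ∃ 𝒬, G.IsIndepCliqueFamily 𝒬 ∧ ⋃ Q ∈ 𝒬, (Q : Set V) = S := by
  classical
  -- `cls a` is the closed neighbourhood of `a` in `S`, which is the clique component of `a`.
  let cls : V → Finset V := fun a => hfin.toFinset.filter (fun x => a = x ∨ G.Adj a x)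
  have mem_cls {a x : V} : x ∈ cls a ↔ x ∈ S ∧ (a = x ∨ G.Adj a x) := by simp [cls]
  have eq_or_adj_symm {a b : V} (h : a = b ∨ G.Adj a b) : b = a ∨ G.Adj b a :=
    h.imp Eq.symm Adj.symm
  have cls_eq {a b : V} (ha : a ∈ S) (hb : b ∈ S) (hab : a = b ∨ G.Adj a b) : cls a = cls b := by
    ext x
    simp only [mem_cls]
    exact ⟨fun ⟨hx, hax⟩ => ⟨hx, hS.eq_or_adj_trans hb ha hx (eq_or_adj_symm hab) hax⟩,
      fun ⟨hx, hbx⟩ => ⟨hx, hS.eq_or_adj_trans ha hb hx hab hbx⟩⟩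
  have cls_eq_of_mem {a x : V} (ha : a ∈ S) (hx : x ∈ cls a) : cls a = cls x :=
    cls_eq ha (mem_cls.1 hx).1 (mem_cls.1 hx).2
  refine ⟨hfin.toFinset.image cls, ⟨?_, ?_⟩, ?_⟩
  · simp only [Finset.mem_image, Set.Finite.mem_toFinset]
    rintro _ ⟨a, ha, rfl⟩ x hx y hy hxy
    rw [Finset.mem_coe, mem_cls] at hx hy
    exact (hS.eq_or_adj_trans hx.1 ha hy.1 (eq_or_adj_symm hx.2) hy.2).resolve_left hxy
  · simp only [Finset.mem_image, Set.Finite.mem_toFinset]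
    rintro _ ⟨a, ha, rfl⟩ _ ⟨b, hb, rfl⟩ hne x hx y hy
    rw [two_le_edist_iff, ← not_or]
    intro hxy
    rw [cls_eq_of_mem ha hx, cls_eq_of_mem hb hy] at hne
    exact hne (cls_eq (mem_cls.1 hx).1 (mem_cls.1 hy).1 hxy)
  · ext x
    simp only [Set.mem_iUnion, Finset.mem_coe, Finset.mem_image, Set.Finite.mem_toFinset]
    constructor
    · rintro ⟨_, ⟨a, -, rfl⟩, hx⟩
      exact (mem_cls.1 hx).1
    · exact fun hx => ⟨cls x, ⟨x, hx, rfl⟩, mem_cls.2 ⟨hx, .inl rfl⟩⟩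

lemma gpNumber_eq_sSup_ncard_isClusterSet (hG : G.ediam ≤ 2) :
    G.gpNumber = sSup {n | ∃ S, G.IsClusterSet S ∧ n = S.ncard} := by
  simp only [gpNumber, isGPSet_iff_isClusterSet hG]

lemma rho_eq_sSup_ncard_isClusterSet [Finite V] :
    G.rho = sSup {n | ∃ S, G.IsClusterSet S ∧ n = S.ncard} := by
  unfold rho
  congr 1
  ext n
  constructor
  · rintro ⟨𝒬, hclique, hindep, rfl⟩
    exact ⟨_, IsIndepCliqueFamily.isClusterSet ⟨hclique, hindep⟩, rfl⟩
  · rintro ⟨S, hS, rfl⟩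
    obtain ⟨𝒬, h𝒬, hunion⟩ := hS.exists_isIndepCliqueFamily S.toFinite
    exact ⟨𝒬, h𝒬.1, h𝒬.2, hunion ▸ rfl⟩

end SimpleGraph

theorem gpNumber_eq_rho_of_diam_two_general {V : Type*} [Fintype V] (G : SimpleGraph V)
    (hdiam : G.ediam = 2) :
    G.gpNumber = G.rho := by
  rw [G.gpNumber_eq_sSup_ncard_isClusterSet hdiam.le, G.rho_eq_sSup_ncard_isClusterSet]

/-- If `G` is a finite connected graph with diameter `2`, then
`gp(G) = ρ(G)`. -/
theorem gpNumber_eq_rho_of_diam_two {V : Type*} [Fintype V] (G : SimpleGraph V)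
    (hconn : G.Connected) (hdiam : G.ediam = 2) :
    G.gpNumber = G.rho :=
  gpNumber_eq_rho_of_diam_two_general G hdiam
end
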